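/- arXiv:1802.02702 — 2 statements merged into one kernel-verified Lean document; each statement's English description precedes it below -/
import Mathlib

section
/- Let μ be a probability measure on ℝⁿ, let C be a finite measurable partition of ℝⁿ (the common-layer partition), and let F¹ and F² be finite measurable partitions (the final overall partitions of the two quality levels) each of which refines C, i.e., every cell of Fˡ is contained in some cell of C, for l = 1, 2. For a partition P, write H(P) = −Σ_{B ∈ P} μ(B)·log₂ μ(B). Suppose a cell A ∈ C is the disjoint union of two measurable sets A₁ and A₂ with μ(A₁) > 0 and μ(A₂) > 0, such that A₁ is a union of cells of F¹ and also a union of cells of F², and likewise for A₂. Let C′ be the partition obtained from C by replacing A with A₁ and A₂. Then: (i) F¹ and F² each refine C′; (ii) the receive-rate entropies H(F¹) and H(F²) are unchanged (they do not depend on the common partition); (iii) H(C′) > H(C); and hence (iv) the total transmit rate strictly decreases: H(F¹) + H(F²) − H(C′) < H(F¹) + H(F²) − H(C). -/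
/-!
Replacing a common cell `A` by the pieces `A₁`, `A₂` does not touch the final partitions, and
every final cell inside `A` stays inside `A₁` or `A₂` because `A₁` is a union of final cells.
The common rate strictly grows because `t ↦ -t log₂ t` is strictly subadditive on positive reals:
`-(p + q) log₂ (p + q) = -p log₂ (p + q) - q log₂ (p + q) < -p log₂ p - q log₂ q`.
-/

open MeasureTheory

/-- The entropy (in bits) of a finite collection of cells under the measure `μ`:
`H(P) = −Σ_{B ∈ P} μ(B)·log₂ μ(B)` (with the convention `0·log₂ 0 = 0`, which holds
automatically since `Real.logb 2 0 = 0` in Mathlib). -/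
noncomputable def partitionEntropy {Ω : Type*} [MeasurableSpace Ω] (μ : Measure Ω)
    (P : Finset (Set Ω)) : ℝ :=
  ∑ B ∈ P, -((μ B).toReal * Real.logb 2 (μ B).toReal)

lemma neg_mul_logb_add_lt {b p q : ℝ} (hb : 1 < b) (hp : 0 < p) (hq : 0 < q) :
    -((p + q) * Real.logb b (p + q)) < -(p * Real.logb b p) + -(q * Real.logb b q) := by
  have hlogp : Real.logb b p < Real.logb b (p + q) := Real.logb_lt_logb hb hp (by linarith)
  have hlogq : Real.logb b q < Real.logb b (p + q) := Real.logb_lt_logb hb hq (by linarith)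
  nlinarith [mul_lt_mul_of_pos_left hlogp hp, mul_lt_mul_of_pos_left hlogq hq]

section Split

variable {Ω : Type*}

lemma subset_sUnion_or_disjoint_sUnion {F T : Finset (Set Ω)}
    (hF : (F : Set (Set Ω)).PairwiseDisjoint id) (hT : T ⊆ F) {B : Set Ω} (hB : B ∈ F) :
    B ⊆ ⋃₀ (T : Set (Set Ω)) ∨ Disjoint B (⋃₀ (T : Set (Set Ω))) := by
  by_cases hBT : B ∈ T
  · exact Or.inl (Set.subset_sUnion_of_mem hBT)
  · exact Or.inr <| Set.disjoint_sUnion_right.2 fun t ht ↦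
      hF hB (hT ht) fun hBt ↦ hBT (hBt ▸ ht)

variable [DecidableEq (Set Ω)]

lemma notMem_erase_of_pairwiseDisjoint {C : Finset (Set Ω)}
    (hC : (C : Set (Set Ω)).PairwiseDisjoint id) {A S : Set Ω} (hA : A ∈ C)
    (hS : S.Nonempty) (hSA : S ⊆ A) : S ∉ C.erase A := by
  intro hmem
  have hdisj : Disjoint S A := hC (Finset.mem_of_mem_erase hmem) hA (Finset.ne_of_mem_erase hmem)
  exact hS.ne_empty (hdisj.eq_bot_of_le hSA)

lemma refines_insert_insert_erase {C F : Finset (Set Ω)}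
    (hFdisj : (F : Set (Set Ω)).PairwiseDisjoint id) (hFref : ∀ B ∈ F, ∃ D ∈ C, B ⊆ D)
    {A A₁ A₂ : Set Ω} (hsplit : A = A₁ ∪ A₂)
    (hA₁F : ∃ T ⊆ F, A₁ = ⋃₀ (T : Set (Set Ω))) :
    ∀ B ∈ F, ∃ D ∈ insert A₁ (insert A₂ (C.erase A)), B ⊆ D := by
  obtain ⟨T, hT, rfl⟩ := hA₁F
  intro B hB
  obtain ⟨D, hD, hBD⟩ := hFref B hB
  by_cases hDA : D = A
  · subst hDA
    rcases subset_sUnion_or_disjoint_sUnion hFdisj hT hB with hB₁ | hB₁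
    · exact ⟨_, Finset.mem_insert_self _ _, hB₁⟩
    · exact ⟨A₂, by simp, hB₁.subset_right_of_subset_union (hsplit ▸ hBD)⟩
  · exact ⟨D, by simp [hDA, hD], hBD⟩

lemma partitionEntropy_lt_insert_insert_erase [MeasurableSpace Ω] (μ : Measure Ω)
    [IsFiniteMeasure μ] {C : Finset (Set Ω)} {A A₁ A₂ : Set Ω} (hA : A ∈ C)
    (hA₁ : A₁ ∉ insert A₂ (C.erase A)) (hA₂ : A₂ ∉ C.erase A) (hμA : μ A = μ A₁ + μ A₂)
    (hpos₁ : 0 < μ A₁) (hpos₂ : 0 < μ A₂) :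
    partitionEntropy μ C < partitionEntropy μ (insert A₁ (insert A₂ (C.erase A))) := by
  have hμA' : (μ A).toReal = (μ A₁).toReal + (μ A₂).toReal := by
    rw [hμA, ENNReal.toReal_add (measure_ne_top μ _) (measure_ne_top μ _)]
  have hsubadd := neg_mul_logb_add_lt one_lt_two
    (ENNReal.toReal_pos hpos₁.ne' (measure_ne_top μ _))
    (ENNReal.toReal_pos hpos₂.ne' (measure_ne_top μ _))
  rw [partitionEntropy, partitionEntropy, ← Finset.add_sum_erase C _ hA,
    Finset.sum_insert hA₁, Finset.sum_insert hA₂, hμA']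
  linarith

end Split

theorem common_layer_split_decreases_transmit_rate_general
    {n : ℕ} [DecidableEq (Set (Fin n → ℝ))]
    (μ : Measure (Fin n → ℝ)) [IsProbabilityMeasure μ]
    (C F₁ F₂ : Finset (Set (Fin n → ℝ)))
    -- `C` is a finite measurable partition of ℝⁿ:
    (hCdisj : (C : Set (Set (Fin n → ℝ))).PairwiseDisjoint id)
    -- `F₁` and `F₂` are finite measurable partitions of ℝⁿ:
    (hF₁disj : (F₁ : Set (Set (Fin n → ℝ))).PairwiseDisjoint id)
    (hF₂disj : (F₂ : Set (Set (Fin n → ℝ))).PairwiseDisjoint id)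
    -- `F₁` and `F₂` each refine `C`:
    (hF₁ref : ∀ B ∈ F₁, ∃ D ∈ C, B ⊆ D)
    (hF₂ref : ∀ B ∈ F₂, ∃ D ∈ C, B ⊆ D)
    -- the cell `A ∈ C` is the disjoint union of `A₁` and `A₂`, both of positive measure:
    (A A₁ A₂ : Set (Fin n → ℝ)) (hA : A ∈ C)
    (hA₂ : MeasurableSet A₂)
    (hdisj12 : Disjoint A₁ A₂) (hsplit : A = A₁ ∪ A₂)
    (hpos₁ : 0 < μ A₁) (hpos₂ : 0 < μ A₂)
    -- `A₁` and `A₂` are each a union of cells of `F₁` and also a union of cells of `F₂`: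
    (hA₁F₁ : ∃ T ⊆ F₁, A₁ = ⋃₀ (T : Set (Set (Fin n → ℝ))))
    (hA₁F₂ : ∃ T ⊆ F₂, A₁ = ⋃₀ (T : Set (Set (Fin n → ℝ))))
    -- `C′` is obtained from `C` by replacing `A` with the two cells `A₁` and `A₂`:
    (C' : Finset (Set (Fin n → ℝ)))
    (hC' : C' = insert A₁ (insert A₂ (C.erase A))) :
    -- (i) `F₁` and `F₂` each refine `C′`;
    (∀ B ∈ F₁, ∃ D ∈ C', B ⊆ D) ∧ (∀ B ∈ F₂, ∃ D ∈ C', B ⊆ D) ∧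
    -- (ii) the receive-rate entropies are unchanged (they depend only on `F₁`, `F₂`);
    partitionEntropy μ F₁ = partitionEntropy μ F₁ ∧
    partitionEntropy μ F₂ = partitionEntropy μ F₂ ∧
    -- (iii) the common rate strictly increases;
    partitionEntropy μ C' > partitionEntropy μ C ∧
    -- (iv) the total transmit rate strictly decreases.
    partitionEntropy μ F₁ + partitionEntropy μ F₂ - partitionEntropy μ C' <
      partitionEntropy μ F₁ + partitionEntropy μ F₂ - partitionEntropy μ C := by
  subst hC'
  have hA₁A : A₁ ⊆ A := hsplit ▸ Set.subset_union_left
  have hA₂A : A₂ ⊆ A := hsplit ▸ Set.subset_union_right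
  have hne₁ : A₁.Nonempty := nonempty_of_measure_ne_zero hpos₁.ne'
  have hne₂ : A₂.Nonempty := nonempty_of_measure_ne_zero hpos₂.ne'
  have hA₁new : A₁ ∉ insert A₂ (C.erase A) := by
    rw [Finset.mem_insert, not_or]
    exact ⟨fun h ↦ hne₁.ne_empty (by simpa [h] using hdisj12),
      notMem_erase_of_pairwiseDisjoint hCdisj hA hne₁ hA₁A⟩
  have hentropy := partitionEntropy_lt_insert_insert_erase μ hA hA₁new
    (notMem_erase_of_pairwiseDisjoint hCdisj hA hne₂ hA₂A)
    (hsplit ▸ measure_union hdisj12 hA₂) hpos₁ hpos₂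
  exact ⟨refines_insert_insert_erase hF₁disj hF₁ref hsplit hA₁F₁,
    refines_insert_insert_erase hF₂disj hF₂ref hsplit hA₁F₂, rfl, rfl, hentropy,
    by linarith⟩

/-- Splitting an irregular common-layer cell `A = A₁ ∪ A₂` (each piece itself a union of
final cells of both quality levels, of positive probability) leaves the final partitions
`F¹`, `F²` refinements of the new common partition `C′`, keeps the receive-rate entropies
`H(F¹)`, `H(F²)` unchanged, strictly increases `H(C′) > H(C)`, and hence strictly decreases
the total transmit rate `H(F¹) + H(F²) − H(C)`. -/
theorem common_layer_split_decreases_transmit_rate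
    {n : ℕ} [DecidableEq (Set (Fin n → ℝ))]
    (μ : Measure (Fin n → ℝ)) [IsProbabilityMeasure μ]
    (C F₁ F₂ : Finset (Set (Fin n → ℝ)))
    -- `C` is a finite measurable partition of ℝⁿ:
    (hCmeas : ∀ B ∈ C, MeasurableSet B)
    (hCdisj : (C : Set (Set (Fin n → ℝ))).PairwiseDisjoint id)
    (hCcover : ⋃₀ (C : Set (Set (Fin n → ℝ))) = Set.univ)
    -- `F₁` and `F₂` are finite measurable partitions of ℝⁿ:
    (hF₁meas : ∀ B ∈ F₁, MeasurableSet B)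
    (hF₁disj : (F₁ : Set (Set (Fin n → ℝ))).PairwiseDisjoint id)
    (hF₁cover : ⋃₀ (F₁ : Set (Set (Fin n → ℝ))) = Set.univ)
    (hF₂meas : ∀ B ∈ F₂, MeasurableSet B)
    (hF₂disj : (F₂ : Set (Set (Fin n → ℝ))).PairwiseDisjoint id)
    (hF₂cover : ⋃₀ (F₂ : Set (Set (Fin n → ℝ))) = Set.univ)
    -- `F₁` and `F₂` each refine `C`:
    (hF₁ref : ∀ B ∈ F₁, ∃ D ∈ C, B ⊆ D)
    (hF₂ref : ∀ B ∈ F₂, ∃ D ∈ C, B ⊆ D)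
    -- the cell `A ∈ C` is the disjoint union of `A₁` and `A₂`, both of positive measure:
    (A A₁ A₂ : Set (Fin n → ℝ)) (hA : A ∈ C)
    (hA₁ : MeasurableSet A₁) (hA₂ : MeasurableSet A₂)
    (hdisj12 : Disjoint A₁ A₂) (hsplit : A = A₁ ∪ A₂)
    (hpos₁ : 0 < μ A₁) (hpos₂ : 0 < μ A₂)
    -- `A₁` and `A₂` are each a union of cells of `F₁` and also a union of cells of `F₂`:
    (hA₁F₁ : ∃ T ⊆ F₁, A₁ = ⋃₀ (T : Set (Set (Fin n → ℝ))))
    (hA₁F₂ : ∃ T ⊆ F₂, A₁ = ⋃₀ (T : Set (Set (Fin n → ℝ))))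
    (hA₂F₁ : ∃ T ⊆ F₁, A₂ = ⋃₀ (T : Set (Set (Fin n → ℝ))))
    (hA₂F₂ : ∃ T ⊆ F₂, A₂ = ⋃₀ (T : Set (Set (Fin n → ℝ))))
    -- `C′` is obtained from `C` by replacing `A` with the two cells `A₁` and `A₂`:
    (C' : Finset (Set (Fin n → ℝ)))
    (hC' : C' = insert A₁ (insert A₂ (C.erase A))) :
    -- (i) `F₁` and `F₂` each refine `C′`;
    (∀ B ∈ F₁, ∃ D ∈ C', B ⊆ D) ∧ (∀ B ∈ F₂, ∃ D ∈ C', B ⊆ D) ∧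
    -- (ii) the receive-rate entropies are unchanged (they depend only on `F₁`, `F₂`);
    partitionEntropy μ F₁ = partitionEntropy μ F₁ ∧
    partitionEntropy μ F₂ = partitionEntropy μ F₂ ∧
    -- (iii) the common rate strictly increases;
    partitionEntropy μ C' > partitionEntropy μ C ∧
    -- (iv) the total transmit rate strictly decreases.
    partitionEntropy μ F₁ + partitionEntropy μ F₂ - partitionEntropy μ C' <
      partitionEntropy μ F₁ + partitionEntropy μ F₂ - partitionEntropy μ C :=
  common_layer_split_decreases_transmit_rate_general μ C F₁ F₂ hCdisj hF₁disj hF₂disj hF₁ref hF₂ref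
    A A₁ A₂ hA hA₂ hdisj12 hsplit hpos₁ hpos₂ hA₁F₁ hA₁F₂ C' hC'
end

section
/- Let a < b be real numbers and let B₁ and B₂ be finite subsets of the open interval (a, b), inducing partitions of [a, b) into half-open subintervals with breakpoint sets B₁ and B₂ respectively (the cells of partition Pᵢ are the intervals between consecutive points of {a} ∪ Bᵢ ∪ {b}). Then a subset S of [a, b) is simultaneously a union of cells of P₁ and a union of cells of P₂ if and only if S is a union of cells of the interval partition whose breakpoint set is B₁ ∩ B₂. In particular, the finest common coarsening of two finite interval partitions of [a, b) is itself an interval partition, with breakpoints B₁ ∩ B₂. -/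
/-!
Suppose `S` is a union of cells of both partitions but separates two points `x ≤ y` that no
common breakpoint separates. Walking from `x` to `y` through the breakpoints of `B₁ ∪ B₂`,
membership in `S` changes between some stopping point `z` and the next breakpoint `c`. The
only breakpoint in `(z, c]` is `c`, so if `c ∉ Bᵢ` then `z` and `c` share a cell of the
`i`-th partition and `S` cannot separate them. Hence `c ∈ B₁ ∩ B₂`, yet `c ∈ (x, y]`.
-/

/-- `S` is a union of cells of the interval partition of `[a, b)` with breakpoint set `B`.
The cell of the partition containing a point `x ∈ [a, b)` is the half-open interval
between consecutive elements of `{a} ∪ B ∪ {b}` around `x`; two points `x, y ∈ [a, b)`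
lie in the same cell iff every breakpoint `c ∈ B` lies on the same side of both
(`c ≤ x ↔ c ≤ y`).  Hence `S` is a union of cells iff `S ⊆ [a, b)` and `S` is saturated:
together with any of its points it contains that point's whole cell. -/
def IsUnionOfCells (a b : ℝ) (B : Finset ℝ) (S : Set ℝ) : Prop :=
  S ⊆ Set.Ico a b ∧
    ∀ x ∈ S, ∀ y ∈ Set.Ico a b, (∀ c ∈ B, (c ≤ x ↔ c ≤ y)) → y ∈ S

open Finset

section SameCell

variable {α : Type*} [LinearOrder α]

def SameCell (B : Finset α) (x y : α) : Prop :=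
  ∀ c ∈ B, c ≤ x ↔ c ≤ y

theorem SameCell.symm {B : Finset α} {x y : α} (h : SameCell B x y) : SameCell B y x :=
  fun c hc => (h c hc).symm

theorem SameCell.mono {B B' : Finset α} {x y : α} (hB : B ⊆ B') (h : SameCell B' x y) :
    SameCell B x y :=
  fun c hc => h c (hB hc)

theorem sameCell_of_forall_notMem_Ioc {B : Finset α} {x y : α} (hxy : x ≤ y)
    (h : ∀ c ∈ B, c ∉ Set.Ioc x y) : SameCell B x y :=
  fun c hc => ⟨fun hcx => hcx.trans hxy, fun hcy => not_lt.1 fun hxc => h c hc ⟨hxc, hcy⟩⟩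

/-- `z` is the last point of `{x} ∪ T` in `[x, y]` on the same side of `S` as `x`, and `c` the
first point of `T ∪ {y}` after `z`. -/
theorem exists_separated_step (T : Finset α) {S : Set α} {x y : α} (hxy : x ≤ y)
    (hS : ¬(x ∈ S ↔ y ∈ S)) :
    ∃ z c, x ≤ z ∧ z < c ∧ c ≤ y ∧ (∀ t ∈ T, t ∈ Set.Ioc z c → t = c) ∧ ¬(z ∈ S ↔ c ∈ S) := by
  classical
  set Z := (insert x T).filter fun t => x ≤ t ∧ t ≤ y ∧ (t ∈ S ↔ x ∈ S)
  have hZ : Z.Nonempty := ⟨x, mem_filter.2 ⟨mem_insert_self x T, le_rfl, hxy, Iff.rfl⟩⟩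
  obtain ⟨-, hxz, hzy, hzS⟩ := mem_filter.1 (Z.max'_mem hZ)
  set z := Z.max' hZ
  have hzy' : z < y := hzy.lt_of_ne fun h => hS (h ▸ hzS).symm
  set C := (insert y T).filter fun t => z < t ∧ t ≤ y
  have hC : C.Nonempty := ⟨y, mem_filter.2 ⟨mem_insert_self y T, hzy', le_rfl⟩⟩
  obtain ⟨hcT, hzc, hcy⟩ := mem_filter.1 (C.min'_mem hC)
  set c := C.min' hC
  refine ⟨z, c, hxz, hzc, hcy, fun t ht htc => ?_, ?_⟩
  · exact le_antisymm htc.2 (C.min'_le t (mem_filter.2 ⟨mem_insert_of_mem ht, htc.1,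
      htc.2.trans hcy⟩))
  · rcases mem_insert.1 hcT with hc_eq | hcT
    · exact hc_eq ▸ fun h => hS (hzS.symm.trans h)
    · exact fun h => (Z.le_max' c (mem_filter.2 ⟨mem_insert_of_mem hcT, hxz.trans hzc.le, hcy,
        h.symm.trans hzS⟩)).not_gt hzc

variable [DecidableEq α]

theorem mem_iff_mem_of_sameCell_inter {I : Set α} (hI : I.OrdConnected) {B₁ B₂ : Finset α}
    {S : Set α} (h₁ : ∀ x ∈ I, ∀ y ∈ I, SameCell B₁ x y → (x ∈ S ↔ y ∈ S))
    (h₂ : ∀ x ∈ I, ∀ y ∈ I, SameCell B₂ x y → (x ∈ S ↔ y ∈ S)) {x y : α} (hx : x ∈ I)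
    (hy : y ∈ I) (hxy : SameCell (B₁ ∩ B₂) x y) : x ∈ S ↔ y ∈ S := by
  wlog hle : x ≤ y generalizing x y
  · exact (this hy hx hxy.symm (le_of_not_ge hle)).symm
  by_contra hsep
  obtain ⟨z, c, hxz, hzc, hcy, hstep, hsep_zc⟩ :=
    exists_separated_step (B₁ ∪ B₂) hle hsep
  have hzI : z ∈ I := hI.out hx hy ⟨hxz, hzc.le.trans hcy⟩
  have hcI : c ∈ I := hI.out hx hy ⟨hxz.trans hzc.le, hcy⟩
  have hc_mem : ∀ B ⊆ B₁ ∪ B₂, (∀ x ∈ I, ∀ y ∈ I, SameCell B x y → (x ∈ S ↔ y ∈ S)) →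
      c ∈ B := by
    intro B hB hsat
    by_contra hcB
    refine hsep_zc (hsat z hzI c hcI ?_)
    exact sameCell_of_forall_notMem_Ioc hzc.le fun t ht htc =>
      hcB (hstep t (hB ht) htc ▸ ht)
  have hc := mem_inter.2 ⟨hc_mem B₁ subset_union_left h₁, hc_mem B₂ subset_union_right h₂⟩
  exact (hxz.trans_lt hzc).not_ge ((hxy c hc).2 hcy)

end SameCell

theorem isUnionOfCells_iff {a b : ℝ} {B : Finset ℝ} {S : Set ℝ} :
    IsUnionOfCells a b B S ↔
      S ⊆ Set.Ico a b ∧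
        ∀ x ∈ Set.Ico a b, ∀ y ∈ Set.Ico a b, SameCell B x y → (x ∈ S ↔ y ∈ S) := by
  refine ⟨fun ⟨hS, hsat⟩ => ⟨hS, fun x hx y hy hxy => ?_⟩, fun ⟨hS, hsat⟩ => ⟨hS, ?_⟩⟩
  · exact ⟨fun hxS => hsat x hxS y hy hxy, fun hyS => hsat y hyS x hx hxy.symm⟩
  · exact fun x hxS y hy hxy => (hsat x (hS hxS) y hy hxy).1 hxS

theorem IsUnionOfCells.mono {a b : ℝ} {B B' : Finset ℝ} {S : Set ℝ} (hB : B ⊆ B')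
    (h : IsUnionOfCells a b B S) : IsUnionOfCells a b B' S :=
  ⟨h.1, fun x hx y hy hxy => h.2 x hx y hy (SameCell.mono hB hxy)⟩

theorem unionOfCells_inter_iff_general (a b : ℝ) (B₁ B₂ : Finset ℝ)
    [DecidableEq ℝ] (S : Set ℝ) :
    (IsUnionOfCells a b B₁ S ∧ IsUnionOfCells a b B₂ S) ↔
      IsUnionOfCells a b (B₁ ∩ B₂) S := by
  refine ⟨fun ⟨h₁, h₂⟩ => ?_, fun h => ⟨h.mono inter_subset_left, h.mono inter_subset_right⟩⟩
  rw [isUnionOfCells_iff] at h₁ h₂ ⊢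
  exact ⟨h₁.1, fun x hx y hy =>
    mem_iff_mem_of_sameCell_inter Set.ordConnected_Ico h₁.2 h₂.2 hx hy⟩

/-- For finite breakpoint sets `B₁, B₂ ⊆ (a, b)`, a set `S ⊆ [a, b)` is simultaneously a
union of cells of the interval partition with breakpoints `B₁` and of the one with
breakpoints `B₂` iff it is a union of cells of the interval partition with breakpoints
`B₁ ∩ B₂`.  In particular, the finest common coarsening of two finite interval partitions
of `[a, b)` is itself an interval partition, with breakpoint set `B₁ ∩ B₂`. -/
theorem unionOfCells_inter_iff (a b : ℝ) (hab : a < b) (B₁ B₂ : Finset ℝ)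
    (hB₁ : (B₁ : Set ℝ) ⊆ Set.Ioo a b) (hB₂ : (B₂ : Set ℝ) ⊆ Set.Ioo a b)
    [DecidableEq ℝ] (S : Set ℝ) :
    (IsUnionOfCells a b B₁ S ∧ IsUnionOfCells a b B₂ S) ↔
      IsUnionOfCells a b (B₁ ∩ B₂) S :=
  unionOfCells_inter_iff_general a b B₁ B₂ S
end
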